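/- Every finite idempotent abelian algebra is absorption-free; that is, if A is a finite idempotent abelian algebra and B is an absorbing subalgebra of A, then B = A. -/

import Mathlib

/-- A (functional) signature: a type of operation symbols, each with an arity. -/
structure Signature where
  ops : Type
  arity : ops → ℕ

/-- Terms of a signature in `n` variables. -/
inductive UTerm (σ : Signature) : ℕ → Type
  | var : ∀ {n}, Fin n → UTerm σ n
  | app : ∀ {n} (f : σ.ops), (Fin (σ.arity f) → UTerm σ n) → UTerm σ n

/-- An algebra of signature `σ` on carrier `A`. -/
structure UAlgebra (σ : Signature) (A : Type) where
  interp : ∀ f : σ.ops, (Fin (σ.arity f) → A) → A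

namespace UAlgebra

variable {σ : Signature} {A : Type}

/-- The term operation induced by a term. -/
def eval (Alg : UAlgebra σ A) {n : ℕ} : UTerm σ n → (Fin n → A) → A
  | .var i, env => env i
  | .app f ts, env => Alg.interp f fun j => Alg.eval (ts j) env

/-- An algebra is idempotent if every basic operation satisfies `f(a,…,a) = a`. -/
def Idempotent (Alg : UAlgebra σ A) : Prop :=
  ∀ (f : σ.ops) (a : A), Alg.interp f (fun _ => a) = a

/-- A congruence: an equivalence relation compatible with the basic operations. -/
def IsCong (Alg : UAlgebra σ A) (θ : A → A → Prop) : Prop :=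
  (∀ a, θ a a) ∧ (∀ a b, θ a b → θ b a) ∧ (∀ a b c, θ a b → θ b c → θ a c) ∧
  ∀ (f : σ.ops) (x y : Fin (σ.arity f) → A),
    (∀ j, θ (x j) (y j)) → θ (Alg.interp f x) (Alg.interp f y)

/-- A subuniverse: a subset closed under the basic operations. -/
def IsSubuniv (Alg : UAlgebra σ A) (B : Set A) : Prop :=
  ∀ (f : σ.ops) (x : Fin (σ.arity f) → A), (∀ j, x j ∈ B) → Alg.interp f x ∈ B

/-- A simple algebra: more than one element, and the only congruences are `0` and `1`. -/
def Simple (Alg : UAlgebra σ A) : Prop :=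
  (∃ a b : A, a ≠ b) ∧
  ∀ θ : A → A → Prop, Alg.IsCong θ → (∀ a b, θ a b ↔ a = b) ∨ (∀ a b, θ a b)

/-- An abelian algebra: for every `(ℓ+m)`-ary term operation `t` and tuples
`a b : Aᶩ`, `u v : Aᵐ`, `t(a,u) = t(a,v) ↔ t(b,u) = t(b,v)`. -/
def Abelian (Alg : UAlgebra σ A) : Prop :=
  ∀ (ℓ m : ℕ) (t : UTerm σ (ℓ + m)) (a b : Fin ℓ → A) (u v : Fin m → A),
    (Alg.eval t (Fin.append a u) = Alg.eval t (Fin.append a v) ↔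
      Alg.eval t (Fin.append b u) = Alg.eval t (Fin.append b v))

/-- `B` is an absorbing subalgebra of `A` with respect to the `k`-ary term `t`:
`B` is a (nonempty) subuniverse, and applying `t` to arguments all of which lie
in `B` except possibly one (arbitrary in `A`) lands in `B`. -/
def AbsorbingWith (Alg : UAlgebra σ A) (B : Set A) {k : ℕ} (t : UTerm σ k) : Prop :=
  B.Nonempty ∧ Alg.IsSubuniv B ∧
  ∀ (j : Fin k) (x : Fin k → A), (∀ i, i ≠ j → x i ∈ B) → Alg.eval t x ∈ B

/-- `B ◁ A` : `B` is absorbing with respect to some term. -/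
def Absorbing (Alg : UAlgebra σ A) (B : Set A) : Prop :=
  ∃ (k : ℕ) (t : UTerm σ k), Alg.AbsorbingWith B t

/-- `B ◁◁ A` : `B` is minimal among absorbing subuniverses of `A`. -/
def MinAbsorbing (Alg : UAlgebra σ A) (B : Set A) : Prop :=
  Alg.Absorbing B ∧ ∀ C : Set A, Alg.Absorbing C → C ⊆ B → C = B

/-- A congruence of the subalgebra with universe `R`. -/
def IsCongOn (Alg : UAlgebra σ A) (R : Set A) (θ : A → A → Prop) : Prop :=
  (∀ a ∈ R, θ a a) ∧ (∀ a b, θ a b → θ b a) ∧ (∀ a b c, θ a b → θ b c → θ a c) ∧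
  (∀ a b, θ a b → a ∈ R ∧ b ∈ R) ∧
  ∀ (f : σ.ops) (x y : Fin (σ.arity f) → A),
    (∀ j, θ (x j) (y j)) → θ (Alg.interp f x) (Alg.interp f y)

/-- The join of `θ₁` and `θ₂` in the congruence lattice of the subalgebra `R`
is the top congruence `1_R`. -/
def JoinIsTop (Alg : UAlgebra σ A) (R : Set A) (θ₁ θ₂ : A → A → Prop) : Prop :=
  ∀ θ : A → A → Prop, Alg.IsCongOn R θ →
    (∀ a b, θ₁ a b → θ a b) → (∀ a b, θ₂ a b → θ a b) →
    ∀ a ∈ R, ∀ b ∈ R, θ a b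

end UAlgebra

/-- Interpreting a `Fin 2`-indexed choice of the variables `x`, `y`. -/
def pick {A : Type} (x y : A) : Fin 2 → A := fun b => if b = 0 then x else y

/-- `t` is a common Taylor term for the family `Alg`: it is idempotent in every
algebra of the family, and for each coordinate `i` there is an identity
`t(u_0,…,u_{n-1}) ≈ t(v_0,…,v_{n-1})` (each `u_j, v_j ∈ {x,y}`, `u_i = x`,
`v_i = y`) holding in every algebra of the family. -/
def IsTaylorFamily {σ : Signature} {ι : Type} {A : ι → Type}
    (Alg : ∀ i, UAlgebra σ (A i)) {n : ℕ} (t : UTerm σ n) : Prop :=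
  ∃ u v : Fin n → Fin n → Fin 2,
    (∀ i : Fin n, u i i = 0 ∧ v i i = 1) ∧
    ∀ k : ι,
      (∀ a : A k, (Alg k).eval t (fun _ => a) = a) ∧
      ∀ (i : Fin n) (x y : A k),
        (Alg k).eval t (fun j => pick x y (u i j)) =
        (Alg k).eval t (fun j => pick x y (v i j))

/-- Taylor term of a single algebra. -/
def IsTaylorFor {σ : Signature} {A : Type} (Alg : UAlgebra σ A) {n : ℕ}
    (t : UTerm σ n) : Prop :=
  IsTaylorFamily (fun _ : PUnit => Alg) t

/-- The product algebra of a family of algebras of a common signature. -/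
def prodAlgebra {σ : Signature} {ι : Type} {A : ι → Type}
    (Alg : ∀ i, UAlgebra σ (A i)) : UAlgebra σ (∀ i, A i) :=
  ⟨fun f x i => (Alg i).interp f (fun j => x j i)⟩

/-- `R ≤_sd ∏ A_i` : `R` is a (nonempty) subuniverse of the product whose
coordinate projections are all surjective. -/
def IsSubdirect {σ : Signature} {ι : Type} {A : ι → Type}
    (Alg : ∀ i, UAlgebra σ (A i)) (R : Set (∀ i, A i)) : Prop :=
  R.Nonempty ∧ (prodAlgebra Alg).IsSubuniv R ∧
  ∀ (i : ι) (a : A i), ∃ r ∈ R, r i = a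

/-- The kernel `η_s` of the projection of `R` onto the coordinates in `s`,
as a relation (congruence of the subalgebra `R`). -/
def projKer {ι : Type} {A : ι → Type} (R : Set (∀ i, A i)) (s : Set ι) :
    (∀ i, A i) → (∀ i, A i) → Prop :=
  fun x y => x ∈ R ∧ y ∈ R ∧ ∀ i ∈ s, x i = y i

/-- The kernels of the `i`-th and `j`-th coordinate projections of `R` coincide. -/
def kerEq {ι : Type} {A : ι → Type} (R : Set (∀ i, A i)) (i j : ι) : Prop :=
  ∀ x ∈ R, ∀ y ∈ R, (x i = y i ↔ x j = y j)
/-- A cube term: a `k`-ary idempotent term such that for each coordinate `i`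
there is an identity `t(x_1,…,x_k) ≈ y` with each `x_j ∈ {x,y}` and `x_i = x`. -/
def IsCubeTerm {σ : Signature} {A : Type} (Alg : UAlgebra σ A) {k : ℕ}
    (t : UTerm σ k) : Prop :=
  (∀ a : A, Alg.eval t (fun _ => a) = a) ∧
  ∀ i : Fin k, ∃ u : Fin k → Fin 2, u i = 0 ∧
    ∀ x y : A, Alg.eval t (fun j => pick x y (u j)) = y

/-- A term operation depends on its `j`-th argument. -/
def TermDependsOn {σ : Signature} {A : Type} (Alg : UAlgebra σ A) {k : ℕ}
    (t : UTerm σ k) (j : Fin k) : Prop :=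
  ∃ (c : Fin k → A) (x y : A),
    Alg.eval t (Function.update c j x) ≠ Alg.eval t (Function.update c j y)

/-- `s` is a sink for `A`: every term operation depending on its `j`-th argument
returns `s` whenever `s` is placed in position `j`. -/
def IsSink {σ : Signature} {A : Type} (Alg : UAlgebra σ A) (s : A) : Prop :=
  ∀ (k : ℕ) (t : UTerm σ k) (j : Fin k), TermDependsOn Alg t j →
    ∀ c : Fin k → A, Alg.eval t (Function.update c j s) = s

/-- `C(β, γ; δ)` : `β` centralizes `γ` modulo `δ`. -/
def Centralizes {σ : Signature} {A : Type} (Alg : UAlgebra σ A)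
    (β γ δ : A → A → Prop) : Prop :=
  ∀ (ℓ m : ℕ) (t : UTerm σ (ℓ + m)) (a b : Fin ℓ → A) (u v : Fin m → A),
    (∀ i, β (a i) (b i)) → (∀ i, γ (u i) (v i)) →
    (δ (Alg.eval t (Fin.append a u)) (Alg.eval t (Fin.append a v)) ↔
      δ (Alg.eval t (Fin.append b u)) (Alg.eval t (Fin.append b v)))

/-- The join `θ₁ ∨ θ₂` in the congruence lattice of `Alg`: the least congruence
containing `θ₁` and `θ₂`. -/
def conJoin {σ : Signature} {A : Type} (Alg : UAlgebra σ A)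
    (θ₁ θ₂ : A → A → Prop) : A → A → Prop :=
  fun x y => ∀ θ : A → A → Prop, Alg.IsCong θ →
    (∀ a b, θ₁ a b → θ a b) → (∀ a b, θ₂ a b → θ a b) → θ x y

/-- The setoid determined by a congruence. -/
def congSetoid {σ : Signature} {A : Type} {Alg : UAlgebra σ A}
    {δ : A → A → Prop} (h : Alg.IsCong δ) : Setoid A :=
  ⟨δ, ⟨h.1, fun hab => h.2.1 _ _ hab, fun hab hbc => h.2.2.1 _ _ _ hab hbc⟩⟩

/-- The quotient algebra `A/δ` (of a congruence-induced setoid). -/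
noncomputable def quotAlgebra {σ : Signature} {A : Type} (Alg : UAlgebra σ A) (s : Setoid A) :
    UAlgebra σ (Quotient s) :=
  ⟨fun f x => Quotient.mk s (Alg.interp f (fun j => (x j).out))⟩

/-- The image `β/δ` of a congruence `β` on the quotient `A/δ`. -/
def quotCong {A : Type} (s : Setoid A) (β : A → A → Prop) :
    Quotient s → Quotient s → Prop :=
  fun x y => ∃ a b : A, Quotient.mk s a = x ∧ Quotient.mk s b = y ∧ β a b

/-- Row-major pairing of indices: `(i, j) ↦ i * m + j`. -/
def pairIdx {l m : ℕ} (i : Fin l) (j : Fin m) : Fin (l * m) :=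
  ⟨i.val * m + j.val, by
    have h1 : i.val * m + j.val < i.val * m + m := Nat.add_lt_add_left j.isLt _
    have h2 : i.val * m + m = (i.val + 1) * m := (Nat.succ_mul i.val m).symm
    have h3 : (i.val + 1) * m ≤ l * m :=
      Nat.mul_le_mul_right m (Nat.succ_le_of_lt i.isLt)
    omega⟩

/-- Simultaneous substitution into a term. -/
def UTerm.bind {σ : Signature} {n k : ℕ} : UTerm σ n → (Fin n → UTerm σ k) → UTerm σ k
  | .var i, s => s i
  | .app f ts, s => .app f (fun j => (ts j).bind s)

/-- The star composition `f ⋆ g` of terms: the `ℓm`-ary term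
`(f ⋆ g)(a₁₁,…,a_{ℓm}) = f(g(a₁₁,…,a₁ₘ), …, g(a_{ℓ1},…,a_{ℓm}))`. -/
def starTerm {σ : Signature} {l m : ℕ} (f : UTerm σ l) (g : UTerm σ m) :
    UTerm σ (l * m) :=
  f.bind (fun i => g.bind (fun j => .var (pairIdx i j)))

/-- Star composition on arity-indexed terms. -/
def sigStar {σ : Signature} (p q : Σ k, UTerm σ k) : Σ k, UTerm σ k :=
  ⟨p.1 * q.1, starTerm p.2 q.2⟩

/-- The left-associated iterated star `p ⋆ q₀ ⋆ q₁ ⋆ ⋯`. -/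
def iterStar {σ : Signature} (p : Σ k, UTerm σ k) :
    List (Σ k, UTerm σ k) → Σ k, UTerm σ k
  | [] => p
  | q :: rest => iterStar (sigStar p q) rest

/-- `B` is an absorbing subuniverse of the subalgebra with universe `R`. -/
def AbsorbingIn {σ : Signature} {A : Type} (Alg : UAlgebra σ A) (R B : Set A) : Prop :=
  B.Nonempty ∧ B ⊆ R ∧ Alg.IsSubuniv B ∧
  ∃ (k : ℕ) (t : UTerm σ k), ∀ (j : Fin k) (x : Fin k → A),
    (∀ i, i ≠ j → x i ∈ B) → x j ∈ R → Alg.eval t x ∈ B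

/-!
Let `B` absorb a finite idempotent algebra `(C; s)` whose operation `s` is a polynomial of `A`,
hence satisfies the term condition; we show `B = C` by induction on `|C|`. Fix `b ∈ B` and
`x ∈ C`. If every map `z ↦ s(z, …, z, b, z, …, z)` is injective on `B`, it permutes `B`, and
the term condition trades the coordinates outside `B` of a tuple of `C` for coordinates in `B`
one at a time; so `s` maps `Cᵏ` into `B`, and `x = s(x, …, x) ∈ B`. Otherwise, by the term
condition, `z ↦ s(z, …, z, x, z, …, z)` is not injective on `C` either; an idempotent iterate
`e` of it retracts `C` onto a smaller set containing `x`, and `B ∩ e(C)` absorbs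
`(e(C); e ∘ s)`.
-/

open Set Function

theorem exists_pos_isIdempotentElem_pow {M : Type*} [Monoid M] [Finite M] (a : M) :
    ∃ n, 0 < n ∧ IsIdempotentElem (a ^ n) := by
  obtain ⟨i, j, hij, hpow⟩ := Finite.exists_ne_map_eq_of_infinite (fun n : ℕ => a ^ n)
  wlog hlt : i < j generalizing i j
  · exact this j i hij.symm hpow.symm (by omega)
  have hstep : ∀ m, i ≤ m → a ^ (m + (j - i)) = a ^ m := fun m hm => by
    rw [show m + (j - i) = (m - i) + j by omega, pow_add, ← hpow, ← pow_add,
      Nat.sub_add_cancel hm]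
  have hperiod : ∀ q m, i ≤ m → a ^ (m + q * (j - i)) = a ^ m := fun q => by
    induction q with
    | zero => simp
    | succ q ih =>
      intro m hm
      rw [add_mul, one_mul, ← add_assoc, hstep _ (by omega), ih m hm]
  have hi : i ≤ (i + 1) * (j - i) := (Nat.le_succ i).trans (Nat.le_mul_of_pos_right _ (by omega))
  exact ⟨(i + 1) * (j - i), Nat.mul_pos (by omega) (by omega), by
    rw [IsIdempotentElem, ← pow_add, hperiod _ _ hi]⟩

theorem Set.ncard_image_iterate_lt {A : Type*} [Finite A] {f : A → A} {C : Set A}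
    (hf : ¬ InjOn f C) {n : ℕ} (hn : 0 < n) : (f^[n] '' C).ncard < C.ncard := by
  refine (ncard_image_le (toFinite C)).lt_of_ne fun heq => hf ?_
  obtain ⟨n, rfl⟩ := Nat.exists_eq_succ_of_ne_zero hn.ne'
  exact InjOn.of_comp (g := f^[n]) ((ncard_image_iff (toFinite C)).1 heq)

section SlotMaps

variable {A : Type} {k : ℕ}

def slotMap (s : (Fin k → A) → A) (j : Fin k) (u z : A) : A :=
  s (update (fun _ => z) j u)

def SlotTermCondition (s : (Fin k → A) → A) : Prop :=
  ∀ (j : Fin k) (u u' : A) (w w' : Fin k → A),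
    s (update w j u) = s (update w' j u) → s (update w j u') = s (update w' j u')

theorem SlotTermCondition.injOn_slotMap {s : (Fin k → A) → A} (hs : SlotTermCondition s)
    {j : Fin k} {u : A} {S : Set A} (hinj : InjOn (slotMap s j u) S) (u' : A) :
    InjOn (slotMap s j u') S :=
  fun _ hz _ hz' h => hinj hz hz' (hs j u' u _ _ h)

/-- `B` absorbs the idempotent algebra `(C; s)`. The algebras met in the induction are
retracts of `A` with a single polynomial operation, modelled by a subset `C` of `A` and an
operation on all of `A`. -/
structure AbsorbsOn (s : (Fin k → A) → A) (C B : Set A) : Prop where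
  subset : B ⊆ C
  nonempty : B.Nonempty
  mapsTo : MapsTo s (univ.pi fun _ => C) C
  closed : MapsTo s (univ.pi fun _ => B) B
  idempotent : ∀ c ∈ C, s (fun _ => c) = c
  absorbs : ∀ (j : Fin k) (v : Fin k → A), v ∈ univ.pi (fun _ => C) → (∀ i ≠ j, v i ∈ B) →
    s v ∈ B

namespace AbsorbsOn

variable {s : (Fin k → A) → A} {C B : Set A}

theorem mapsTo_slotMap (h : AbsorbsOn s C B) (j : Fin k) {u : A} (hu : u ∈ C) :
    MapsTo (slotMap s j u) C C :=
  fun _ hz => h.mapsTo ((update_mem_pi_iff_of_mem (fun _ _ => hz)).2 fun _ => hu)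

theorem mapsTo_slotMap_absorbing (h : AbsorbsOn s C B) (j : Fin k) {u : A} (hu : u ∈ C) :
    MapsTo (slotMap s j u) B B :=
  fun z hz => h.absorbs j _ ((update_mem_pi_iff_of_mem (fun _ _ => h.subset hz)).2 fun _ => hu)
    fun i hi => by simpa [hi] using hz

theorem slotMap_self (h : AbsorbsOn s C B) (j : Fin k) {x : A} (hx : x ∈ C) :
    slotMap s j x x = x := by
  simpa [slotMap] using h.idempotent x hx

theorem mem_of_mem_update [Finite A] (h : AbsorbsOn s C B) (hs : SlotTermCondition s)
    {j : Fin k} {b : A} (hb : b ∈ B) (hinj : InjOn (slotMap s j b) B) {v : Fin k → A}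
    (hv : v ∈ univ.pi fun _ => C) (hvb : s (update v j b) ∈ B) : s v ∈ B := by
  have hbij := ((toFinite B).injOn_iff_bijOn_of_mapsTo
    (h.mapsTo_slotMap_absorbing j (h.subset hb))).1 hinj
  obtain ⟨z, hz, hzv⟩ := hbij.surjOn hvb
  have hswap := hs j b (v j) _ _ hzv
  rw [update_eq_self] at hswap
  rw [← hswap]
  exact h.absorbs j _ ((update_mem_pi_iff_of_mem (fun _ _ => h.subset hz)).2 fun _ => hv j trivial)
    fun i hi => by simpa [hi] using hz

theorem mapsTo_of_injOn_slotMap [Finite A] (h : AbsorbsOn s C B) (hs : SlotTermCondition s)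
    {b : A} (hb : b ∈ B) (hinj : ∀ j, InjOn (slotMap s j b) B) :
    MapsTo s (univ.pi fun _ => C) B := by
  suffices ∀ n : ℕ, ∀ v ∈ univ.pi (fun _ => C), (∀ i : Fin k, n ≤ i → v i ∈ B) → s v ∈ B from
    fun v hv => this k v hv fun i hi => absurd i.isLt (by omega)
  intro n
  induction n with
  | zero => exact fun v _ hvB => h.closed fun i _ => hvB i (Nat.zero_le _)
  | succ n ih =>
    intro v hv hvB
    by_cases hn : n < k
    · refine h.mem_of_mem_update hs hb (hinj ⟨n, hn⟩) hv
        (ih _ ((update_mem_pi_iff_of_mem hv).2 fun _ => h.subset hb) fun i hi => ?_)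
      by_cases hin : i = ⟨n, hn⟩
      · simpa [hin] using hb
      · have : (i : ℕ) ≠ n := fun hc => hin (Fin.ext hc)
        simpa [hin] using hvB i (by omega)
    · exact ih v hv fun i hi => absurd i.isLt (by omega)

theorem comp_retraction (h : AbsorbsOn s C B) {e : A → A} (heC : MapsTo e C C)
    (heB : MapsTo e B B) (he : ∀ c ∈ C, e (e c) = e c) :
    AbsorbsOn (e ∘ s) (e '' C) (B ∩ e '' C) where
  subset := inter_subset_right
  nonempty :=
    let ⟨b, hb⟩ := h.nonempty
    ⟨e b, heB hb, mem_image_of_mem e (h.subset hb)⟩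
  mapsTo _ hv := mem_image_of_mem e (h.mapsTo (pi_mono (fun _ _ => heC.image_subset) hv))
  closed v hv := by
    have hvB : v ∈ univ.pi fun _ => B := pi_mono (fun _ _ => inter_subset_left) hv
    exact ⟨heB (h.closed hvB), mem_image_of_mem e (h.mapsTo (pi_mono (fun _ _ => h.subset) hvB))⟩
  idempotent := by
    rintro _ ⟨c, hc, rfl⟩
    rw [comp_apply, h.idempotent _ (heC hc), he c hc]
  absorbs j v hv hvB := by
    have hvC : v ∈ univ.pi fun _ => C := pi_mono (fun _ _ => heC.image_subset) hv
    exact ⟨heB (h.absorbs j v hvC fun i hi => (hvB i hi).1), mem_image_of_mem e (h.mapsTo hvC)⟩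

end AbsorbsOn

end SlotMaps

namespace UAlgebra

variable {σ : Signature} {A : Type} (Alg : UAlgebra σ A)

inductive IsPolyOp : {n : ℕ} → ((Fin n → A) → A) → Prop
  | proj {n : ℕ} (i : Fin n) : IsPolyOp fun v => v i
  | const {n : ℕ} (a : A) : IsPolyOp fun _ : Fin n → A => a
  | app {n : ℕ} (f : σ.ops) {g : Fin (σ.arity f) → (Fin n → A) → A} :
      (∀ i, IsPolyOp (g i)) → IsPolyOp fun v => Alg.interp f fun i => g i v

variable {Alg}

theorem eval_bind {n m : ℕ} (t : UTerm σ n) (s : Fin n → UTerm σ m) (v : Fin m → A) :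
    Alg.eval (t.bind s) v = Alg.eval t fun i => Alg.eval (s i) v := by
  induction t with
  | var i => rfl
  | app f ts ih => simp only [UTerm.bind, eval, ih]

theorem isPolyOp_eval {n : ℕ} (t : UTerm σ n) : Alg.IsPolyOp (Alg.eval t) := by
  induction t with
  | var i => exact .proj i
  | app f ts ih => exact .app f ih

theorem IsPolyOp.comp {n m : ℕ} {f : (Fin n → A) → A} (hf : Alg.IsPolyOp f)
    {g : Fin n → (Fin m → A) → A} (hg : ∀ i, Alg.IsPolyOp (g i)) :
    Alg.IsPolyOp fun v => f fun i => g i v := by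
  induction hf with
  | proj i => exact hg i
  | const a => exact .const a
  | app f _ ih => exact .app f fun i => ih i

theorem IsPolyOp.exists_term [Finite A] {n : ℕ} {f : (Fin n → A) → A} (hf : Alg.IsPolyOp f) :
    ∃ t : UTerm σ (Nat.card A + n),
      ∀ v, f v = Alg.eval t (Fin.append (Finite.equivFin A).symm v) := by
  induction hf with
  | proj i => exact ⟨.var (Fin.natAdd _ i), fun v => by simp [eval]⟩
  | const a => exact ⟨.var (Fin.castAdd _ (Finite.equivFin A a)), fun v => by simp [eval]⟩
  | app f _ ih =>
    choose t ht using ih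
    exact ⟨.app f t, fun v => by simp [eval, ht]⟩

theorem IsPolyOp.append_eq_append_iff [Finite A] (hab : Alg.Abelian) {ℓ m : ℕ}
    {f : (Fin (ℓ + m) → A) → A} (hf : Alg.IsPolyOp f) (a b : Fin ℓ → A) (u v : Fin m → A) :
    f (Fin.append a u) = f (Fin.append a v) ↔ f (Fin.append b u) = f (Fin.append b v) := by
  obtain ⟨t, ht⟩ := hf.exists_term
  set c := (Finite.equivFin A).symm
  let t' : UTerm σ (Nat.card A + ℓ + m) :=
    t.bind fun i => .var (Fin.cast (Nat.add_assoc _ _ _).symm i)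
  have key : ∀ a u, f (Fin.append a u) = Alg.eval t' (Fin.append (Fin.append c a) u) := by
    intro a u
    rw [ht, eval_bind]
    simp [eval, Fin.append_assoc]
  simpa only [key] using hab _ _ t' (Fin.append c a) (Fin.append c b) u v

theorem IsPolyOp.slotTermCondition [Finite A] (hab : Alg.Abelian) {k : ℕ}
    {s : (Fin k → A) → A} (hs : Alg.IsPolyOp s) : SlotTermCondition s := by
  intro j u u' w w'
  let g : (Fin (1 + k) → A) → A :=
    fun z => s fun i => if i = j then z (Fin.castAdd k 0) else z (Fin.natAdd 1 i)
  have hg : Alg.IsPolyOp g := hs.comp fun i => by split_ifs <;> exact .proj _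
  have key : ∀ y w, g (Fin.append (fun _ => y) w) = s (update w j y) := by
    intro y w
    simp only [g, Fin.append_left, Fin.append_right]
    congr 1
    funext i
    by_cases hi : i = j <;> simp [hi]
  simpa only [key] using (hg.append_eq_append_iff hab (fun _ => u) (fun _ => u') w w').1

theorem IsPolyOp.iterate_slotMap_comp {k : ℕ} {s : (Fin k → A) → A} (hs : Alg.IsPolyOp s)
    (j : Fin k) (x : A) (n : ℕ) : Alg.IsPolyOp fun v => (slotMap s j x)^[n] (s v) := by
  induction n with
  | zero => exact hs
  | succ n ih =>
    simp only [iterate_succ_apply', slotMap]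
    exact hs.comp fun i => by
      by_cases hi : i = j
      · simpa [hi] using .const x
      · simpa [hi] using ih

theorem Idempotent.eval_const (hidem : Alg.Idempotent) {n : ℕ} (t : UTerm σ n) (a : A) :
    Alg.eval t (fun _ => a) = a := by
  induction t with
  | var i => rfl
  | app f ts ih => simp only [eval, ih, hidem f a]

theorem IsSubuniv.eval_mem {B : Set A} (hB : Alg.IsSubuniv B) {n : ℕ} (t : UTerm σ n)
    {v : Fin n → A} (hv : ∀ i, v i ∈ B) : Alg.eval t v ∈ B := by
  induction t with
  | var i => exact hv i
  | app f ts ih => exact hB f _ ih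

end UAlgebra

theorem AbsorbsOn.eq_of_isPolyOp {σ : Signature} {A : Type} [Finite A] {Alg : UAlgebra σ A}
    (hab : Alg.Abelian) {k : ℕ} {s : (Fin k → A) → A} (hs : Alg.IsPolyOp s) {C B : Set A}
    (h : AbsorbsOn s C B) : B = C := by
  induction hn : C.ncard using Nat.strong_induction_on generalizing s C B with
  | _ n ih =>
    refine h.subset.antisymm fun x hx => ?_
    obtain ⟨b, hb⟩ := h.nonempty
    have htc := hs.slotTermCondition hab
    by_cases hinj : ∀ j, InjOn (slotMap s j b) B
    · simpa [h.idempotent x hx] using h.mapsTo_of_injOn_slotMap htc hb hinj fun _ _ => hx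
    obtain ⟨j, hj⟩ := not_forall.mp hinj
    have hnx : ¬ InjOn (slotMap s j x) C :=
      fun hx' => hj ((htc.injOn_slotMap hx' b).mono h.subset)
    have : Finite (Function.End A) := inferInstanceAs (Finite (A → A))
    obtain ⟨M, hM, he⟩ := exists_pos_isIdempotentElem_pow (M := Function.End A) (slotMap s j x)
    set e : A → A := (slotMap s j x)^[M]
    have hret := h.comp_retraction ((h.mapsTo_slotMap j hx).iterate M)
      ((h.mapsTo_slotMap_absorbing j hx).iterate M) fun c _ => congrFun he c
    have hx' : x ∈ e '' C := ⟨x, hx, iterate_fixed (h.slotMap_self j hx) M⟩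
    rw [← ih _ (hn ▸ ncard_image_iterate_lt hnx hM) (hs.iterate_slotMap_comp j x M) hret rfl] at hx'
    exact hx'.1

/-- Finite idempotent abelian algebras are absorption-free. -/
theorem abelian_absorption_free
    {σ : Signature} {A : Type} [Finite A]
    (Alg : UAlgebra σ A) (hidem : Alg.Idempotent) (hab : Alg.Abelian)
    (B : Set A) (hB : Alg.Absorbing B) : B = Set.univ := by
  obtain ⟨k, t, hne, hsub, habs⟩ := hB
  exact AbsorbsOn.eq_of_isPolyOp hab (UAlgebra.isPolyOp_eval t)
    { subset := subset_univ B
      nonempty := hne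
      mapsTo := fun _ _ => trivial
      closed := fun _ hv => hsub.eval_mem t fun i => hv i trivial
      idempotent := fun c _ => hidem.eval_const t c
      absorbs := fun j v _ hv => habs j v hv }
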